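/- arXiv:1408.1712 — 2 statements merged into one kernel-verified Lean document; each statement's English description precedes it below -/
import Mathlib

section
/- Let F : ℝⁿ → ℝⁿ be a C¹ vector field, φ : U → ℝ a C¹ function on an open set U, and suppose there exists a continuous function K : U → ℝ with ∇φ(x) · F(x) = K(x) φ(x) for all x ∈ U (Darboux condition). Then the zero set {x ∈ U : φ(x) = 0} is invariant under the flow of x' = F(x): any solution starting in the zero set and remaining in U stays in the zero set. -/
/-! If `g' = k g` with `k` continuous, then `exp (-∫ k) • g` has derivative zero, so `g`
vanishes identically once it vanishes at one time. Along a solution of `x' = F x` the Darboux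
condition says exactly that `g = φ ∘ x` satisfies `g' = (K ∘ x) g`. -/

open Real

section LinearScalarODE

variable {E : Type*} [NormedAddCommGroup E] [NormedSpace ℝ E] {g : ℝ → E} {k : ℝ → ℝ}

theorem hasDerivAt_exp_neg_integral_smul_of_hasDerivAt_smul (hk : Continuous k)
    (hg : ∀ t, HasDerivAt g (k t • g t) t) (t₀ t : ℝ) :
    HasDerivAt (fun t => exp (-∫ s in t₀..t, k s) • g t) 0 t := by
  have hH : HasDerivAt (fun t => ∫ s in t₀..t, k s) (k t) t :=
    intervalIntegral.integral_hasDerivAt_right (hk.intervalIntegrable _ _)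
      (hk.stronglyMeasurableAtFilter _ _) hk.continuousAt
  refine (hH.neg.exp.smul (hg t)).congr_deriv ?_
  rw [smul_smul, ← add_smul, mul_neg, add_neg_cancel, zero_smul]

theorem eq_zero_of_hasDerivAt_smul_of_eq_zero (hk : Continuous k)
    (hg : ∀ t, HasDerivAt g (k t • g t) t) {t₀ : ℝ} (h₀ : g t₀ = 0) (t : ℝ) : g t = 0 := by
  have hderiv := hasDerivAt_exp_neg_integral_smul_of_hasDerivAt_smul hk hg t₀
  have hconst := is_const_of_deriv_eq_zero (fun s => (hderiv s).differentiableAt)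
    (fun s => (hderiv s).deriv) t t₀
  simpa [h₀, (exp_pos _).ne'] using hconst

end LinearScalarODE

theorem darboux_invariance_general (n : ℕ) (F : (Fin n → ℝ) → (Fin n → ℝ))
    (U : Set (Fin n → ℝ)) (hU : IsOpen U)
    (φ : (Fin n → ℝ) → ℝ) (hφ : ContDiffOn ℝ 1 φ U)
    (K : (Fin n → ℝ) → ℝ) (hK : ContinuousOn K U)
    (hdarboux : ∀ x ∈ U, fderiv ℝ φ x (F x) = K x * φ x)
    (x : ℝ → (Fin n → ℝ)) (hx : ∀ t, HasDerivAt x (F (x t)) t)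
    (hxU : ∀ t, x t ∈ U) (h0 : φ (x 0) = 0) :
    ∀ t, φ (x t) = 0 := by
  have hx_cont : Continuous x := continuous_iff_continuousAt.mpr fun t => (hx t).continuousAt
  have hφx : ∀ t, HasDerivAt (φ ∘ x) (K (x t) • φ (x t)) t := fun t => by
    have hφ_diff : DifferentiableAt ℝ φ (x t) :=
      (hφ.differentiableOn one_ne_zero).differentiableAt (hU.mem_nhds (hxU t))
    rw [smul_eq_mul, ← hdarboux _ (hxU t)]
    exact hφ_diff.hasFDerivAt.comp_hasDerivAt t (hx t)
  exact eq_zero_of_hasDerivAt_smul_of_eq_zero (hK.comp_continuous hx_cont hxU) hφx h0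

/-- Darboux invariance: if ∇φ·F = K·φ on an open set U, the zero set of φ is
invariant under the flow of x' = F(x): a solution starting in {φ = 0} and
remaining in U stays in {φ = 0}. -/
theorem darboux_invariance (n : ℕ) (F : (Fin n → ℝ) → (Fin n → ℝ)) (hF : ContDiff ℝ 1 F)
    (U : Set (Fin n → ℝ)) (hU : IsOpen U)
    (φ : (Fin n → ℝ) → ℝ) (hφ : ContDiffOn ℝ 1 φ U)
    (K : (Fin n → ℝ) → ℝ) (hK : ContinuousOn K U)
    (hdarboux : ∀ x ∈ U, fderiv ℝ φ x (F x) = K x * φ x)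
    (x : ℝ → (Fin n → ℝ)) (hx : ∀ t, HasDerivAt x (F (x t)) t)
    (hxU : ∀ t, x t ∈ U) (h0 : φ (x 0) = 0) :
    ∀ t, φ (x t) = 0 :=
  darboux_invariance_general n F U hU φ hφ K hK hdarboux x hx hxU h0
end

section
/- For the vector field F on ℝ⁵ given by F(x) = (−x₂, x₁, L(x₁²+x₂²−x₃), β₁+x₄², β₂+x₂²), the function φ(x) = (x₁²+x₂²)(x₁²+x₂²−x₃)(x₄²+β₁) satisfies the Darboux relation L_F φ = −(L − 2x₄)·φ, hence its zero set is invariant under the flow of x' = F(x). -/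
/-!
Along a trajectory of `x' = F x`, the function `y t = φ (x t)` satisfies the scalar linear ODE
`y' = K (x t) * y` with the cofactor `K = -(L - 2 x₄)`, so `y t = y 0 * exp (∫₀ᵗ K (x s) ds)`
vanishes identically as soon as `y 0 = 0`.
-/

open Real intervalIntegral

theorem eq_mul_exp_integral_of_hasDerivAt {a y : ℝ → ℝ} (ha : Continuous a)
    (hy : ∀ t, HasDerivAt y (a t * y t) t) (t : ℝ) :
    y t = y 0 * exp (∫ s in (0 : ℝ)..t, a s) := by
  set A : ℝ → ℝ := fun t => ∫ s in (0 : ℝ)..t, a s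
  have hA : ∀ t, HasDerivAt A (a t) t := fun t =>
    (ha.integral_hasStrictDerivAt 0 t).hasDerivAt
  have hconst : ∀ t, HasDerivAt (fun s => y s * exp (-A s)) 0 t := fun t =>
    ((hy t).fun_mul (hA t).fun_neg.exp).congr_deriv (by ring)
  have key := is_const_of_deriv_eq_zero (fun s => (hconst s).differentiableAt)
    (fun s => (hconst s).deriv) t 0
  simp only [A, integral_same, neg_zero, exp_zero, mul_one] at key
  rw [← key, mul_assoc, ← exp_add, neg_add_cancel, exp_zero, mul_one]

theorem apply_eq_mul_exp_integral_of_fderiv_eq_mul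
    {E : Type*} [NormedAddCommGroup E] [NormedSpace ℝ E]
    {φ K : E → ℝ} {F : E → E} (hφ : Differentiable ℝ φ) (hK : Continuous K)
    (hdarboux : ∀ x, fderiv ℝ φ x (F x) = K x * φ x)
    {x : ℝ → E} (hx : ∀ t, HasDerivAt x (F (x t)) t) (t : ℝ) :
    φ (x t) = φ (x 0) * exp (∫ s in (0 : ℝ)..t, K (x s)) := by
  have hxc : Continuous x := continuous_iff_continuousAt.2 fun t => (hx t).continuousAt
  refine eq_mul_exp_integral_of_hasDerivAt (y := fun s => φ (x s)) (hK.comp hxc)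
    (fun s => ?_) t
  rw [Function.comp_apply, ← hdarboux]
  exact (hφ (x s)).hasFDerivAt.comp_hasDerivAt s (hx s)

def gearField (L β₁ β₂ : ℝ) (x : Fin 5 → ℝ) : Fin 5 → ℝ :=
  ![-x 1, x 0, L * ((x 0) ^ 2 + (x 1) ^ 2 - x 2), β₁ + (x 3) ^ 2, β₂ + (x 1) ^ 2]

def gearDarbouxPoly (β₁ : ℝ) (x : Fin 5 → ℝ) : ℝ :=
  ((x 0) ^ 2 + (x 1) ^ 2) * ((x 0) ^ 2 + (x 1) ^ 2 - x 2) * ((x 3) ^ 2 + β₁)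

theorem differentiable_gearDarbouxPoly (β₁ : ℝ) : Differentiable ℝ (gearDarbouxPoly β₁) := by
  unfold gearDarbouxPoly; fun_prop

theorem fderiv_gearDarbouxPoly_gearField (L β₁ β₂ : ℝ) (x : Fin 5 → ℝ) :
    fderiv ℝ (gearDarbouxPoly β₁) x (gearField L β₁ β₂ x) =
      -(L - 2 * x 3) * gearDarbouxPoly β₁ x := by
  have hp (i : Fin 5) := hasFDerivAt_apply (𝕜 := ℝ) i x
  have hr := ((hp 0).pow 2).add ((hp 1).pow 2)
  have h : HasFDerivAt (gearDarbouxPoly β₁) _ x :=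
    (hr.mul (hr.sub (hp 2))).mul (((hp 3).pow 2).add_const β₁)
  rw [h.fderiv]
  simp only [gearField, gearDarbouxPoly, Pi.mul_apply, Pi.add_apply, Pi.sub_apply,
    add_apply, sub_apply, smul_apply, ContinuousLinearMap.proj_apply, Matrix.cons_val, smul_eq_mul, nsmul_eq_mul]
  ring

/-- Darboux relation L_F φ = −(L − 2x₄)·φ for the Gear et al. fifth-order system,
hence the zero set of φ is invariant under the flow. -/
theorem darboux_gear (L β₁ β₂ : ℝ)
    (F : (Fin 5 → ℝ) → (Fin 5 → ℝ))
    (hF : ∀ x, F x = ![-x 1, x 0, L * ((x 0) ^ 2 + (x 1) ^ 2 - x 2),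
      β₁ + (x 3) ^ 2, β₂ + (x 1) ^ 2])
    (φ : (Fin 5 → ℝ) → ℝ)
    (hφ : ∀ x, φ x = ((x 0) ^ 2 + (x 1) ^ 2) * ((x 0) ^ 2 + (x 1) ^ 2 - x 2) *
      ((x 3) ^ 2 + β₁)) :
    (∀ x, fderiv ℝ φ x (F x) = -(L - 2 * x 3) * φ x) ∧
    (∀ x : ℝ → (Fin 5 → ℝ), (∀ t, HasDerivAt x (F (x t)) t) →
      φ (x 0) = 0 → ∀ t, φ (x t) = 0) := by
  obtain rfl : F = gearField L β₁ β₂ := funext hF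
  obtain rfl : φ = gearDarbouxPoly β₁ := funext hφ
  have hdarboux := fderiv_gearDarbouxPoly_gearField L β₁ β₂
  refine ⟨hdarboux, fun x hx h0 t => ?_⟩
  rw [apply_eq_mul_exp_integral_of_fderiv_eq_mul (differentiable_gearDarbouxPoly β₁)
    (by fun_prop) hdarboux hx t, h0, zero_mul]
end
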